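/- arXiv:math/0405181 — 5 statements merged into one kernel-verified Lean document; each statement's English description precedes it below -/
import Mathlib

section
/- Let G be a finite positive bipartite graph with at least one edge. Then there is a polynomial p such that H_G(r) = p(r) for all nonnegative integers r. -/
open Finset

variable {V : Type*} [Fintype V] [DecidableEq V]

/-- A magic labeling of the finite graph with vertex set `V` and edge set `E`,
of magic sum `r`: for each vertex `v` the sum of the labels of all edges
incident to `v` equals `r`. -/
def IsMagic (E : Finset (Sym2 V)) (L : Sym2 V → ℕ) (r : ℕ) : Prop :=
  (∀ e, e ∉ E → L e = 0) ∧ ∀ v : V, ∑ e ∈ E with v ∈ e, L e = r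

/-- `HG E r` is the number of magic labelings of magic sum `r`. -/
noncomputable def HG (E : Finset (Sym2 V)) (r : ℕ) : ℕ :=
  Nat.card {L : Sym2 V → ℕ // IsMagic E L r}

/-- A positive graph: for every edge `e` there is a magic labeling `L` with `L e > 0`. -/
def IsPositive (E : Finset (Sym2 V)) : Prop :=
  ∀ e ∈ E, ∃ (L : Sym2 V → ℕ) (r : ℕ), IsMagic E L r ∧ 0 < L e

/-!
A bipartite graph with a magic labeling of positive sum has a perfect matching `q` (Hall's
theorem on the support of the labeling). Subtracting `q` maps the labelings of sum `r + 1` that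
dominate `q` bijectively onto those of sum `r`; the others vanish on some edge of `q` and are
counted by inclusion–exclusion over the subgraphs `E \ S` with `∅ ≠ S ⊆ q`. So
`H_E(r + 1) - H_E(r)` is a signed sum of values `H_{E \ S}(r + 1)`, which are polynomial in
`r` by strong induction on `E` (without a perfect matching, `H(r) = 0` for `r > 0`), and
summing a polynomial gives a polynomial.
-/

open Polynomial

theorem exists_eval_eq_sum_range (P : ℚ[X]) :
    ∃ Φ : ℚ[X], ∀ n : ℕ, Φ.eval (n : ℚ) = ∑ k ∈ range n, P.eval (k : ℚ) := by
  induction P using Polynomial.induction_on' with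
  | add P Q hP hQ =>
    obtain ⟨Φ, hΦ⟩ := hP
    obtain ⟨Ψ, hΨ⟩ := hQ
    exact ⟨Φ + Ψ, fun n => by simp [hΦ, hΨ, sum_add_distrib]⟩
  | monomial p a =>
    refine ⟨C (a / (p + 1)) * (Polynomial.bernoulli p.succ - C (_root_.bernoulli p.succ)),
      fun n => ?_⟩
    have hp : (p + 1 : ℚ) ≠ 0 := by positivity
    simp only [eval_mul, eval_C, eval_sub, eval_monomial, ← sum_range_pow_eq_bernoulli_sub,
      ← mul_sum]
    field_simp

theorem exists_eval_eq_of_sub_eq_eval {f : ℕ → ℚ} {P : ℚ[X]}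
    (hf : ∀ n, f (n + 1) - f n = P.eval (n : ℚ)) :
    ∃ p : ℚ[X], ∀ n : ℕ, f n = p.eval (n : ℚ) := by
  obtain ⟨Φ, hΦ⟩ := exists_eval_eq_sum_range P
  refine ⟨C (f 0) + Φ, fun n => ?_⟩
  rw [eval_add, eval_C, hΦ, ← sum_congr rfl fun k _ => hf k, sum_range_sub]
  ring

section Magic

variable {E S : Finset (Sym2 V)} {L q : Sym2 V → ℕ} {r : ℕ}

theorem sum_incident_eq_sum_mk (hL : ∀ e, e ∉ E → L e = 0) (v : V) :
    ∑ e ∈ E with v ∈ e, L e = ∑ u, L s(v, u) := by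
  have himage : (univ.image (fun u => s(v, u)) : Finset (Sym2 V)) = univ.filter (v ∈ ·) := by
    ext e
    simp [Sym2.mem_iff_exists, eq_comm]
  rw [← sum_image (fun _ _ _ _ h => Sym2.congr_right.mp h), himage]
  exact sum_subset (filter_subset_filter _ (subset_univ E)) fun e hv he =>
    hL e fun hE => he (mem_filter.mpr ⟨hE, (mem_filter.mp hv).2⟩)

theorem isMagic_iff_sum_mk :
    IsMagic E L r ↔ (∀ e, e ∉ E → L e = 0) ∧ ∀ v, ∑ u, L s(v, u) = r :=
  and_congr_right fun hL => forall_congr' fun v => by rw [sum_incident_eq_sum_mk hL]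

theorem IsMagic.le (hL : IsMagic E L r) (e : Sym2 V) : L e ≤ r := by
  induction e with
  | _ v u =>
    exact (isMagic_iff_sum_mk.mp hL).2 v ▸
      single_le_sum (f := fun u => L s(v, u)) (fun _ _ => Nat.zero_le _) (mem_univ u)

theorem isMagic_sdiff_iff : IsMagic (E \ S) L r ↔ IsMagic E L r ∧ ∀ e ∈ S, L e = 0 := by
  simp only [isMagic_iff_sum_mk, mem_sdiff, not_and_not_right]
  grind

instance (E : Finset (Sym2 V)) (L : Sym2 V → ℕ) (r : ℕ) : Decidable (IsMagic E L r) := by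
  unfold IsMagic; infer_instance

def magicFinset (E : Finset (Sym2 V)) (r : ℕ) : Finset (Sym2 V → ℕ) :=
  {L ∈ Fintype.piFinset fun _ => range (r + 1) | IsMagic E L r}

theorem mem_magicFinset : L ∈ magicFinset E r ↔ IsMagic E L r := by
  simp only [magicFinset, mem_filter, Fintype.mem_piFinset, mem_range, and_iff_right_iff_imp]
  exact fun hL e => Nat.lt_succ_of_le (hL.le e)

theorem HG_eq_card_magicFinset (E : Finset (Sym2 V)) (r : ℕ) : HG E r = #(magicFinset E r) := by
  rw [HG, ← Nat.card_eq_finsetCard]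
  exact Nat.card_congr (Equiv.subtypeEquivRight fun _ => mem_magicFinset.symm)

theorem magicFinset_sdiff :
    magicFinset (E \ S) r = {L ∈ magicFinset E r | ∀ e ∈ S, L e = 0} := by
  ext L
  rw [mem_filter, mem_magicFinset, mem_magicFinset, isMagic_sdiff_iff]

theorem IsMagic.exists_perm_pos (hL : IsMagic E L r) (hr : 0 < r) :
    ∃ σ : Equiv.Perm V, ∀ v, 0 < L s(v, σ v) := by
  have hrow := (isMagic_iff_sum_mk.mp hL).2
  let t : V → Finset V := fun v => {u | 0 < L s(v, u)}
  have hall : ∀ A : Finset V, #A ≤ #(A.biUnion t) := by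
    intro A
    set N := A.biUnion t
    refine Nat.le_of_mul_le_mul_right ?_ hr
    calc #A * r = ∑ v ∈ A, ∑ u ∈ N, L s(v, u) := by
          rw [← smul_eq_mul, ← sum_const]
          refine sum_congr rfl fun v hv => ?_
          rw [← hrow v]
          refine (sum_subset (subset_univ N) fun u _ hu => ?_).symm
          by_contra h
          exact hu (mem_biUnion.mpr ⟨v, hv, by simpa [t] using Nat.pos_of_ne_zero h⟩)
      _ ≤ ∑ v, ∑ u ∈ N, L s(v, u) := sum_le_sum_of_subset (subset_univ A)
      _ = ∑ u ∈ N, ∑ v, L s(u, v) := by rw [sum_comm]; simp_rw [Sym2.eq_swap]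
      _ = #N * r := by simp [hrow]
  obtain ⟨f, hf, hft⟩ := (all_card_le_biUnion_card_iff_exists_injective t).1 hall
  exact ⟨Equiv.ofBijective f (Finite.injective_iff_bijective.mp hf),
    fun v => by simpa [t] using hft v⟩

theorem exists_isMagic_one_of_involutive {π : V → V} (hπ : Function.Involutive π)
    (hE : ∀ v, s(v, π v) ∈ E) : ∃ q, IsMagic E q 1 := by
  let M : Finset (Sym2 V) := univ.image fun v => s(v, π v)
  have hM : ∀ v u, s(v, u) ∈ M ↔ u = π v := by
    intro v u
    simp only [M, mem_image, mem_univ, true_and]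
    constructor
    · rintro ⟨w, hw⟩
      rcases Sym2.eq_iff.mp hw with ⟨rfl, rfl⟩ | ⟨rfl, rfl⟩
      exacts [rfl, (hπ _).symm]
    · rintro rfl
      exact ⟨v, rfl⟩
  refine ⟨fun e => if e ∈ M then 1 else 0,
    isMagic_iff_sum_mk.mpr ⟨fun e he => if_neg fun heM => he ?_, fun v => by simp [hM]⟩⟩
  obtain ⟨w, -, rfl⟩ := mem_image.mp heM
  exact hE w

theorem exists_isMagic_one_of_bipartite {c : V → Bool} (hc : ∀ u v, s(u, v) ∈ E → c u ≠ c v)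
    (hL : IsMagic E L r) (hr : 0 < r) : ∃ q, IsMagic E q 1 := by
  obtain ⟨σ, hσ⟩ := hL.exists_perm_pos hr
  have hσE : ∀ v, s(v, σ v) ∈ E := fun v => by
    by_contra h
    exact (hσ v).ne' (hL.1 _ h)
  have hcσ : ∀ v, c (σ v) = !c v := fun v => by
    have := hc _ _ (hσE v)
    revert this
    cases c v <;> cases c (σ v) <;> decide
  -- `σ` alternates colours, so `σ` on one side and `σ⁻¹` on the other form an involution.
  refine exists_isMagic_one_of_involutive (π := fun u => if c u then σ u else σ.symm u)
    (fun u => ?_) (fun u => ?_)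
  · cases hu : c u
    · have : c (σ.symm u) = true := by simpa [hu] using hcσ (σ.symm u)
      simp [hu, this]
    · simp [hu, hcσ]
  · cases hu : c u
    · simpa [hu, Sym2.eq_swap] using hσE (σ.symm u)
    · simpa [hu] using hσE u

theorem card_filter_le_magicFinset {s : ℕ} (hq : IsMagic E q s) (r : ℕ) :
    #{L ∈ magicFinset E (r + s) | ∀ e, q e ≤ L e} = #(magicFinset E r) := by
  refine card_bij' (fun L _ => L - q) (fun L _ => L + q) (fun L hL => ?_) (fun L hL => ?_)
    (fun L hL => tsub_add_cancel_of_le (mem_filter.mp hL).2)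
    (fun L _ => add_tsub_cancel_right L q)
  · obtain ⟨hL, hqL⟩ := mem_filter.mp hL
    rw [mem_magicFinset] at hL ⊢
    refine ⟨fun e he => by simp [hL.1 e he], fun v => ?_⟩
    simp only [Pi.sub_apply]
    rw [sum_tsub_distrib _ fun e _ => hqL e, hL.2 v, hq.2 v, Nat.add_sub_cancel]
  · rw [mem_magicFinset] at hL
    refine mem_filter.mpr ⟨mem_magicFinset.mpr ⟨fun e he => ?_, fun v => ?_⟩, fun e => le_add_self⟩
    · simp [hL.1 e he, hq.1 e he]
    · simp only [Pi.add_apply]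
      rw [sum_add_distrib, hL.2 v, hq.2 v]

theorem filter_not_le_magicFinset (hq : IsMagic E q 1) (r : ℕ) :
    {L ∈ magicFinset E r | ¬∀ e, q e ≤ L e} =
      {e ∈ E | 0 < q e}.biUnion fun e => {L ∈ magicFinset E r | L e = 0} := by
  ext L
  simp only [mem_filter, mem_biUnion, not_forall, not_le]
  constructor
  · rintro ⟨hL, e, hLe⟩
    have heE : e ∈ E := by
      by_contra he
      simp [hq.1 e he] at hLe
    have := hq.le e
    exact ⟨e, ⟨heE, by omega⟩, hL, by omega⟩
  · rintro ⟨e, ⟨-, hqe⟩, hL, hLe⟩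
    exact ⟨hL, e, by omega⟩

theorem card_magicFinset_succ (hq : IsMagic E q 1) (r : ℕ) :
    (#(magicFinset E (r + 1)) : ℤ) = #(magicFinset E r) +
      ∑ S ∈ {e ∈ E | 0 < q e}.powerset with S.Nonempty,
        (-1 : ℤ) ^ (#S + 1) * (#(magicFinset (E \ S) (r + 1)) : ℤ) := by
  rw [← card_filter_add_card_filter_not (fun L => ∀ e, q e ≤ L e), card_filter_le_magicFinset hq,
    filter_not_le_magicFinset hq, Nat.cast_add, inclusion_exclusion_card_biUnion,
    ← sum_coe_sort ({e ∈ E | 0 < q e}.powerset.filter (·.Nonempty))]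
  congr 1
  refine sum_congr rfl fun S _ => ?_
  rw [magicFinset_sdiff]
  congr 3
  ext L
  simp only [mem_inf', mem_filter]
  obtain ⟨e, he⟩ := (mem_filter.mp S.2).2
  exact ⟨fun h => ⟨(h e he).1, fun i hi => (h i hi).2⟩, fun h i hi => ⟨h.1, h.2 i hi⟩⟩

theorem exists_poly_card_magicFinset_of_isMagic_one (hq : IsMagic E q 1)
    (ih : ∀ F ⊂ E, ∃ p : ℚ[X], ∀ r, 0 < r → (#(magicFinset F r) : ℚ) = p.eval (r : ℚ)) :
    ∃ p : ℚ[X], ∀ r : ℕ, (#(magicFinset E r) : ℚ) = p.eval (r : ℚ) := by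
  have : ∀ F, ∃ p : ℚ[X], F ⊂ E → ∀ r, 0 < r → (#(magicFinset F r) : ℚ) = p.eval (r : ℚ) :=
    fun F => if hF : F ⊂ E then (ih F hF).imp fun _ hp _ => hp else ⟨0, fun h => absurd h hF⟩
  choose p hp using this
  refine exists_eval_eq_of_sub_eq_eval (P := ∑ S ∈ {e ∈ E | 0 < q e}.powerset with S.Nonempty,
    C ((-1 : ℚ) ^ (#S + 1)) * (p (E \ S)).comp (X + 1)) fun r => ?_
  calc (#(magicFinset E (r + 1)) : ℚ) - #(magicFinset E r)
      = ∑ S ∈ {e ∈ E | 0 < q e}.powerset with S.Nonempty,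
          (-1 : ℚ) ^ (#S + 1) * #(magicFinset (E \ S) (r + 1)) := by
        rw [sub_eq_iff_eq_add']
        exact_mod_cast card_magicFinset_succ hq r
    _ = _ := by
        rw [eval_finsetSum]
        refine sum_congr rfl fun S hS => ?_
        obtain ⟨hSq, hSne⟩ := mem_filter.mp hS
        have hSE : E \ S ⊂ E :=
          sdiff_ssubset ((mem_powerset.mp hSq).trans (filter_subset _ E)) hSne
        rw [eval_mul, eval_C, eval_comp, hp _ hSE _ r.succ_pos]
        simp

theorem exists_poly_card_magicFinset_of_bipartite {c : V → Bool}
    (hc : ∀ u v, s(u, v) ∈ E → c u ≠ c v) :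
    ∃ p : ℚ[X], ∀ r, 0 < r → (#(magicFinset E r) : ℚ) = p.eval (r : ℚ) := by
  induction E using Finset.strongInduction with
  | H E ih =>
  by_cases hpm : ∃ q, IsMagic E q 1
  · obtain ⟨q, hq⟩ := hpm
    obtain ⟨p, hp⟩ := exists_poly_card_magicFinset_of_isMagic_one hq fun F hF =>
      ih F hF fun u v h => hc u v (hF.subset h)
    exact ⟨p, fun r _ => hp r⟩
  · refine ⟨0, fun r hr => ?_⟩
    rw [eval_zero, Nat.cast_eq_zero, card_eq_zero, eq_empty_iff_forall_notMem]
    exact fun L hL => hpm (exists_isMagic_one_of_bipartite hc (mem_magicFinset.mp hL) hr)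

end Magic

/-- Let `G` be a finite positive bipartite graph with at least one edge.  Then
there is a polynomial `p` with `H_G(r) = p(r)` for all nonnegative integers `r`. -/
theorem bipartite_magic_polynomial (E : Finset (Sym2 V))
    (hbip : ∃ c : V → Bool, ∀ u v : V, s(u, v) ∈ E → c u ≠ c v)
    (hpos : IsPositive E) (hne : E.Nonempty) :
    ∃ p : Polynomial ℚ, ∀ r : ℕ, (HG E r : ℚ) = p.eval (r : ℚ) := by
  obtain ⟨c, hc⟩ := hbip
  obtain ⟨e, he⟩ := hne
  obtain ⟨L, r, hL, hLe⟩ := hpos e he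
  obtain ⟨q, hq⟩ := exists_isMagic_one_of_bipartite hc hL (hLe.trans_le (hL.le e))
  obtain ⟨p, hp⟩ := exists_poly_card_magicFinset_of_isMagic_one hq fun F hF =>
    exists_poly_card_magicFinset_of_bipartite fun u v h => hc u v (hF.subset h)
  exact ⟨p, fun r => by rw [HG_eq_card_magicFinset, hp]⟩
end

section
/- Let G be a finite positive graph with at least one edge. Then the polytope P_G of magic labelings of G is a rational polytope of dimension q - n + b, where q is the number of edges of G, n is the number of vertices, and b is the number of connected components of G that are bipartite. -/
open Finset

variable {V : Type*} [Fintype V] [DecidableEq V]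

/-- The polytope `P_G` of magic labelings of the graph with edge set `E`:
assignments of nonnegative reals to the edges such that at every vertex the
labels of the incident edges (loops counted once) sum to `1`. -/
def PG (E : Finset (Sym2 V)) : Set (Sym2 V → ℝ) :=
  {x | (∀ e, e ∉ E → x e = 0) ∧ (∀ e, 0 ≤ x e) ∧ ∀ v : V, ∑ e ∈ E with v ∈ e, x e = 1}

/-- The simple graph used to define connected components. -/
def compGraph (E : Finset (Sym2 V)) : SimpleGraph V :=
  SimpleGraph.fromRel (fun u v => s(u, v) ∈ E)

/-- The number of bipartite connected components of the graph with edge set `E`. -/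
noncomputable def numBipComp (E : Finset (Sym2 V)) : ℕ :=
  Nat.card {C : (compGraph E).ConnectedComponent //
    ∃ c : V → Bool, ∀ u v : V, s(u, v) ∈ E →
      (compGraph E).connectedComponentMk u = C → c u ≠ c v}

/-!
`P_G` is cut out of the labelings supported on `E` by `N x = 1` and `x ≥ 0`, where `N` is the
vertex-edge incidence matrix (a loop contributes a single `1`). Summing the labelings provided by
positivity gives a point of `P_G` that is positive on every edge, so the affine span of `P_G` is a
translate of `ker N` and has dimension `q - rank N = q - n + dim ker Nᵀ`. A vertex function `y`
lies in `ker Nᵀ` iff `y u + y v = 0` along every edge (`2 y u = 0` at a loop): it vanishes on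
non-bipartite components and is `±` a constant on each bipartite one, so `dim ker Nᵀ = b`.
At an extreme point `x` the columns of `N` on the support of `x` are independent, since otherwise
`x` could be moved both ways inside `P_G`; hence `x` is the unique solution of a linear system
with rational coefficients and is rational.
-/

open Matrix Filter Topology

theorem SimpleGraph.Reachable.eq_of_forall_adj {W α : Type*} {G : SimpleGraph W} {f : W → α}
    (hf : ∀ u v, G.Adj u v → f u = f v) {u v : W} (h : G.Reachable u v) : f u = f v := by
  rw [SimpleGraph.reachable_iff_reflTransGen] at h
  induction h with
  | refl => rfl
  | tail _ hab ih => exact ih.trans (hf _ _ hab)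

theorem Function.extend_val_apply_of_not {α γ : Type*} {p : α → Prop} (g : Subtype p → γ)
    (j : α → γ) {a : α} (ha : ¬ p a) : Function.extend Subtype.val g j a = j a :=
  Function.extend_apply' _ _ _ fun ⟨b, hb⟩ => ha (hb ▸ b.2)

theorem Matrix.finrank_ker_mulVecLin_add_card {K m n : Type*} [Field K] [Fintype m] [Fintype n]
    (A : Matrix m n K) :
    Module.finrank K (LinearMap.ker A.mulVecLin) + Fintype.card m =
      Module.finrank K (LinearMap.ker Aᵀ.mulVecLin) + Fintype.card n := by
  have h := A.mulVecLin.finrank_range_add_finrank_ker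
  have hT := Aᵀ.mulVecLin.finrank_range_add_finrank_ker
  have hrank := A.rank_transpose
  simp only [Matrix.rank, Module.finrank_fintype_fun_eq_card] at h hT hrank
  omega

theorem Matrix.exists_eq_comp_of_mulVec_eq {K L m n : Type*} [Field K] [Field L] [Fintype m]
    [Fintype n] (f : K →+* L) (A : Matrix m n K) (b : m → K) {x : n → L}
    (hA : Function.Injective (A.map f).mulVec) (hx : A.map f *ᵥ x = f ∘ b) :
    ∃ q : n → K, x = f ∘ q := by
  classical
  have hker : LinearMap.ker A.mulVecLin = ⊥ := by
    refine Matrix.ker_mulVecLin_eq_bot_iff.2 fun q hq => funext fun j => f.injective ?_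
    have hfq : (f ∘ q : n → L) = 0 := hA <| funext fun i => by
      rw [Matrix.mulVec_zero, ← RingHom.map_mulVec, hq]; simp
    simpa using congrFun hfq j
  obtain ⟨g, hg⟩ := A.mulVecLin.exists_leftInverse_of_injective hker
  have hBA : LinearMap.toMatrix' g * A = 1 := by
    rw [← LinearMap.toMatrix'_toLin' A, ← LinearMap.toMatrix'_comp, Matrix.toLin'_apply', hg,
      LinearMap.toMatrix'_id]
  refine ⟨LinearMap.toMatrix' g *ᵥ b, ?_⟩
  calc x = (LinearMap.toMatrix' g * A).map f *ᵥ x := by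
        rw [hBA, Matrix.map_one f f.map_zero f.map_one, Matrix.one_mulVec]
    _ = (LinearMap.toMatrix' g).map f *ᵥ (f ∘ b) := by
        rw [Matrix.map_mul, ← Matrix.mulVec_mulVec, hx]
    _ = f ∘ (LinearMap.toMatrix' g *ᵥ b) := funext fun i => (RingHom.map_mulVec _ _ _ i).symm

theorem exists_pos_forall_abs_mul_le {ι : Type*} [Finite ι] {x d : ι → ℝ} (hx : ∀ i, 0 ≤ x i)
    (hd : ∀ i, x i = 0 → d i = 0) : ∃ ε > (0 : ℝ), ∀ i, |ε * d i| ≤ x i := by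
  have hsmall : ∀ᶠ ε in 𝓝 (0 : ℝ), ∀ i, |ε * d i| ≤ x i := by
    refine Filter.eventually_all.2 fun i => ?_
    rcases (hx i).eq_or_lt with hxi | hxi
    · simp [hd i hxi.symm, ← hxi]
    · have hcont : Continuous fun ε : ℝ => |ε * d i| := by fun_prop
      exact hcont.tendsto' 0 0 (by simp) |>.eventually (ge_mem_nhds hxi)
  obtain ⟨ε, hε, hεpos⟩ :=
    ((hsmall.filter_mono (nhdsWithin_le_nhds (s := Set.Ioi 0))).and self_mem_nhdsWithin).exists
  exact ⟨ε, hεpos, hε⟩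

section Positivity

omit [Fintype V]

variable {E : Finset (Sym2 V)}

theorem IsMagic.pos_of_pos {L : Sym2 V → ℕ} {r : ℕ} (hL : IsMagic E L r) {e : Sym2 V}
    (he : e ∈ E) (hLe : 0 < L e) : 0 < r := by
  have hle : L e ≤ ∑ f ∈ E with e.out.1 ∈ f, L f :=
    single_le_sum (fun _ _ => Nat.zero_le _) (mem_filter.2 ⟨he, Sym2.out_fst_mem e⟩)
  exact hLe.trans_le (hle.trans_eq (hL.2 _))

theorem IsPositive.exists_isMagic_pos (hpos : IsPositive E) :
    ∃ L r, IsMagic E L r ∧ ∀ e ∈ E, 0 < L e := by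
  choose! L r hL hLpos using hpos
  refine ⟨∑ e ∈ E, L e, ∑ e ∈ E, r e, ⟨fun f hf => ?_, fun v => ?_⟩, fun e he => ?_⟩
  · simp only [Finset.sum_apply]
    exact sum_eq_zero fun e he => (hL e he).1 f hf
  · simp only [Finset.sum_apply]
    rw [sum_comm]
    exact sum_congr rfl fun e he => (hL e he).2 v
  · rw [Finset.sum_apply]
    exact (hLpos e he).trans_le (single_le_sum (f := fun c => L c e) (fun _ _ => Nat.zero_le _) he)

theorem IsPositive.exists_mem_PG_pos (hpos : IsPositive E) (hne : E.Nonempty) :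
    ∃ x ∈ PG E, ∀ e ∈ E, 0 < x e := by
  obtain ⟨L, r, hL, hLpos⟩ := hpos.exists_isMagic_pos
  obtain ⟨e, he⟩ := hne
  have hr : (0 : ℝ) < r := by exact_mod_cast hL.pos_of_pos he (hLpos e he)
  refine ⟨fun f => L f / r, ⟨fun f hf => by simp [hL.1 f hf], fun f => by positivity, fun v => ?_⟩,
    fun f hf => div_pos (by exact_mod_cast hLpos f hf) hr⟩
  rw [← sum_div, ← Nat.cast_sum, hL.2 v, div_self hr.ne']

end Positivity

section Kernel

variable {E : Finset (Sym2 V)}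

def magicKernel (E : Finset (Sym2 V)) : Submodule ℝ (Sym2 V → ℝ) where
  carrier := {x | (∀ e, e ∉ E → x e = 0) ∧ ∀ v : V, ∑ e ∈ E with v ∈ e, x e = 0}
  add_mem' {x y} hx hy := ⟨fun e he => by simp [hx.1 e he, hy.1 e he],
    fun v => by simp [sum_add_distrib, hx.2 v, hy.2 v]⟩
  zero_mem' := ⟨fun _ _ => rfl, fun _ => sum_const_zero⟩
  smul_mem' c x hx := ⟨fun e he => by simp [hx.1 e he], fun v => by simp [← mul_sum, hx.2 v]⟩

omit [Fintype V] in
theorem sub_mem_magicKernel {x y : Sym2 V → ℝ} (hx : x ∈ PG E) (hy : y ∈ PG E) :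
    x - y ∈ magicKernel E :=
  ⟨fun e he => by simp [hx.1 e he, hy.1 e he],
    fun v => by simp [sum_sub_distrib, hx.2.2 v, hy.2.2 v]⟩

omit [Fintype V] in
theorem add_smul_mem_PG {x d : Sym2 V → ℝ} (hx : x ∈ PG E) (hd : d ∈ magicKernel E) {ε : ℝ}
    (hε : ∀ e, |ε * d e| ≤ x e) : x + ε • d ∈ PG E := by
  refine ⟨fun e he => by simp [hx.1 e he, hd.1 e he], fun e => ?_, fun v => ?_⟩
  · simp only [Pi.add_apply, Pi.smul_apply, smul_eq_mul]
    linarith [neg_abs_le (ε * d e), hε e]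
  · simp [sum_add_distrib, ← mul_sum, hx.2.2 v, hd.2 v]

theorem exists_pos_add_smul_mem_PG {x d : Sym2 V → ℝ} (hx : x ∈ PG E) (hd : d ∈ magicKernel E)
    (hsupp : ∀ e, x e = 0 → d e = 0) : ∃ ε > (0 : ℝ), x + ε • d ∈ PG E ∧ x + (-ε) • d ∈ PG E := by
  obtain ⟨ε, hε, hle⟩ := exists_pos_forall_abs_mul_le hx.2.1 hsupp
  exact ⟨ε, hε, add_smul_mem_PG hx hd hle, add_smul_mem_PG hx hd fun e => by simpa using hle e⟩

theorem direction_affineSpan_PG {x₀ : Sym2 V → ℝ} (hx₀ : x₀ ∈ PG E)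
    (hpos : ∀ e ∈ E, 0 < x₀ e) : (affineSpan ℝ (PG E)).direction = magicKernel E := by
  rw [direction_affineSpan]
  refine le_antisymm (Submodule.span_le.2 ?_) fun d hd => ?_
  · rintro _ ⟨x, hx, y, hy, rfl⟩
    exact sub_mem_magicKernel hx hy
  · have hsupp : ∀ e, x₀ e = 0 → d e = 0 := fun e h0 =>
      hd.1 e fun he => (hpos e he).ne' h0
    obtain ⟨ε, hε, hmem, -⟩ := exists_pos_add_smul_mem_PG hx₀ hd hsupp
    have hεd : ε • d ∈ vectorSpan ℝ (PG E) := by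
      simpa using vsub_mem_vectorSpan ℝ hmem hx₀
    exact (Submodule.smul_mem_iff _ hε.ne').1 hεd

theorem eq_zero_of_mem_extremePoints {x d : Sym2 V → ℝ} (hx : x ∈ Set.extremePoints ℝ (PG E))
    (hd : d ∈ magicKernel E) (hsupp : ∀ e, x e = 0 → d e = 0) : d = 0 := by
  obtain ⟨ε, hε, hplus, hminus⟩ := exists_pos_add_smul_mem_PG hx.1 hd hsupp
  have hmid : x ∈ openSegment ℝ (x + ε • d) (x + (-ε) • d) :=
    ⟨1 / 2, 1 / 2, by norm_num, by norm_num, by norm_num, by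
      ext e; simp only [Pi.add_apply, Pi.smul_apply, smul_eq_mul]; ring⟩
  have hεd : ε • d = 0 := by simpa using hx.2 hplus hminus hmid
  exact (smul_eq_zero.1 hεd).resolve_left hε.ne'

end Kernel

section Incidence

variable {E : Finset (Sym2 V)}

def incMatrix (R : Type*) [Zero R] [One R] (E : Finset (Sym2 V)) : Matrix V E R :=
  Matrix.of fun v e => if v ∈ (e : Sym2 V) then 1 else 0

omit [Fintype V] in
theorem incMatrix_map {R S : Type*} [NonAssocSemiring R] [NonAssocSemiring S] (f : R →+* S) :
    (incMatrix R E).map f = incMatrix S E := by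
  ext v e
  simp [incMatrix, apply_ite f]

omit [Fintype V] in
theorem incMatrix_mulVec {R : Type*} [NonAssocSemiring R] (x : Sym2 V → R) (v : V) :
    (incMatrix R E *ᵥ fun e => x e) v = ∑ e ∈ E with v ∈ e, x e := by
  rw [sum_filter, ← sum_coe_sort E]
  simp [incMatrix, mulVec, dotProduct]

theorem transpose_incMatrix_mulVec_mk {R : Type*} [NonAssocSemiring R] (y : V → R) {u v : V}
    (he : s(u, v) ∈ E) :
    ((incMatrix R E)ᵀ *ᵥ y) ⟨s(u, v), he⟩ = if u = v then y u else y u + y v := by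
  have hsum : ((incMatrix R E)ᵀ *ᵥ y) ⟨s(u, v), he⟩ = ∑ w ∈ {u, v}, y w := by
    simp only [mulVec, dotProduct, transpose_apply, incMatrix, of_apply, ite_mul, one_mul,
      zero_mul]
    rw [← sum_filter]
    exact sum_congr (by ext; simp [Sym2.mem_iff]) fun _ _ => rfl
  rw [hsum]
  split_ifs with huv
  · simp [huv]
  · exact sum_pair huv

theorem mem_ker_transpose_incMatrix_iff {y : V → ℝ} :
    y ∈ LinearMap.ker (incMatrix ℝ E)ᵀ.mulVecLin ↔ ∀ u v, s(u, v) ∈ E → y u + y v = 0 := by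
  rw [LinearMap.mem_ker, mulVecLin_apply]
  refine ⟨fun h u v he => ?_, fun h => funext fun ⟨e, he⟩ => ?_⟩
  · have hval := congrFun h ⟨s(u, v), he⟩
    rw [transpose_incMatrix_mulVec_mk] at hval
    split_ifs at hval with huv
    · simp [← huv, hval]
    · exact hval
  · induction e using Sym2.inductionOn with
    | hf u v =>
      rw [transpose_incMatrix_mulVec_mk, Pi.zero_apply]
      split_ifs with huv
      · subst huv
        linarith [h u u he]
      · exact h u v he

end Incidence

section Restriction

variable {E : Finset (Sym2 V)}

omit [Fintype V] in
theorem extend_mem_magicKernel {S : Finset (Sym2 V)} (hS : S ⊆ E) {d : S → ℝ}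
    (hd : incMatrix ℝ S *ᵥ d = 0) : Function.extend Subtype.val d 0 ∈ magicKernel E := by
  have hoff : ∀ e ∉ S, Function.extend Subtype.val d 0 e = 0 := fun e he =>
    Function.extend_val_apply_of_not d 0 he
  refine ⟨fun e he => hoff e fun heS => he (hS heS), fun v => ?_⟩
  have hrestrict : (fun e : S => Function.extend Subtype.val d 0 e.1) = d :=
    funext (Subtype.val_injective.extend_apply d 0)
  have hsum : ∑ e ∈ S with v ∈ e, Function.extend Subtype.val d 0 e =
      ∑ e ∈ E with v ∈ e, Function.extend Subtype.val d 0 e :=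
    sum_subset (filter_subset_filter _ hS) fun e hE hnS => hoff e fun heS =>
      hnS (mem_filter.2 ⟨heS, (mem_filter.1 hE).2⟩)
  rw [← hsum, ← incMatrix_mulVec, hrestrict, hd, Pi.zero_apply]

omit [Fintype V] in
theorem incMatrix_mulVec_eq_zero {x : Sym2 V → ℝ} (hx : x ∈ magicKernel E) :
    incMatrix ℝ E *ᵥ (fun e => x e) = 0 :=
  funext fun v => (incMatrix_mulVec x v).trans (hx.2 v)

noncomputable def magicKernelEquiv (E : Finset (Sym2 V)) :
    magicKernel E ≃ₗ[ℝ] LinearMap.ker (incMatrix ℝ E).mulVecLin where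
  toFun x := ⟨fun e => x.1 e, incMatrix_mulVec_eq_zero x.2⟩
  invFun d := ⟨Function.extend Subtype.val d.1 0, extend_mem_magicKernel subset_rfl d.2⟩
  map_add' _ _ := rfl
  map_smul' _ _ := rfl
  left_inv x := by
    ext e
    by_cases he : e ∈ E
    · exact Subtype.val_injective.extend_apply _ _ ⟨e, he⟩
    · exact (Function.extend_val_apply_of_not _ _ he).trans (x.2.1 e he).symm
  right_inv d := by
    ext e
    exact Subtype.val_injective.extend_apply _ _ e

end Restriction

section Bipartite

variable {E : Finset (Sym2 V)}

omit [Fintype V] [DecidableEq V] in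
theorem compGraph_adj {u v : V} : (compGraph E).Adj u v ↔ u ≠ v ∧ s(u, v) ∈ E := by
  rw [compGraph, SimpleGraph.fromRel_adj, Sym2.eq_swap (a := v)]
  simp

omit [Fintype V] [DecidableEq V] in
theorem compGraph_mk_eq_of_mem {u v : V} (he : s(u, v) ∈ E) :
    (compGraph E).connectedComponentMk u = (compGraph E).connectedComponentMk v := by
  by_cases huv : u = v
  · rw [huv]
  · exact SimpleGraph.ConnectedComponent.sound (compGraph_adj.2 ⟨huv, he⟩).reachable

def IsBipartiteComp (E : Finset (Sym2 V)) (C : (compGraph E).ConnectedComponent) : Prop :=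
  ∃ c : V → Bool, ∀ u v : V, s(u, v) ∈ E →
    (compGraph E).connectedComponentMk u = C → c u ≠ c v

noncomputable def IsBipartiteComp.sign {C : (compGraph E).ConnectedComponent}
    (h : IsBipartiteComp E C) (v : V) : ℝ :=
  if h.choose v then 1 else -1

omit [Fintype V] [DecidableEq V] in
theorem IsBipartiteComp.sign_mul_self {C : (compGraph E).ConnectedComponent}
    (h : IsBipartiteComp E C) (v : V) : h.sign v * h.sign v = 1 := by
  unfold sign; split_ifs <;> norm_num

omit [Fintype V] [DecidableEq V] in
theorem IsBipartiteComp.sign_eq_neg {C : (compGraph E).ConnectedComponent}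
    (h : IsBipartiteComp E C) {u v : V} (he : s(u, v) ∈ E)
    (hu : (compGraph E).connectedComponentMk u = C) : h.sign v = -h.sign u := by
  have hne := h.choose_spec u v he hu
  revert hne
  unfold sign
  cases h.choose u <;> cases h.choose v <;> norm_num

variable {y : V → ℝ}

omit [Fintype V] [DecidableEq V] in
theorem abs_eq_of_reachable (hy : ∀ u v, s(u, v) ∈ E → y u + y v = 0) {u v : V}
    (h : (compGraph E).Reachable u v) : |y u| = |y v| :=
  h.eq_of_forall_adj (f := fun w => |y w|) fun a b hab => by
    rw [eq_neg_of_add_eq_zero_left (hy a b (compGraph_adj.1 hab).2), abs_neg]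

omit [Fintype V] [DecidableEq V] in
theorem isBipartiteComp_of_ne_zero (hy : ∀ u v, s(u, v) ∈ E → y u + y v = 0) {v : V}
    (hv : y v ≠ 0) : IsBipartiteComp E ((compGraph E).connectedComponentMk v) := by
  refine ⟨fun w => decide (0 < y w), fun a b hab ha => ?_⟩
  have ha0 : y a ≠ 0 := abs_ne_zero.1 <|
    (abs_eq_of_reachable hy (SimpleGraph.ConnectedComponent.exact ha)).trans_ne (abs_ne_zero.2 hv)
  dsimp only
  rw [eq_neg_of_add_eq_zero_right (hy a b hab)]
  rcases ha0.lt_or_gt with h | h <;> simp [h, h.not_gt]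

omit [Fintype V] [DecidableEq V] in
theorem mul_sign_eq_of_reachable (hy : ∀ u v, s(u, v) ∈ E → y u + y v = 0)
    {C : (compGraph E).ConnectedComponent} (h : IsBipartiteComp E C) {u v : V}
    (hu : (compGraph E).connectedComponentMk u = C) (huv : (compGraph E).Reachable u v) :
    y v * h.sign v = y u * h.sign u := by
  classical
  let f : V → ℝ := fun w => if (compGraph E).connectedComponentMk w = C then y w * h.sign w else 0
  have hf : ∀ a b, (compGraph E).Adj a b → f a = f b := by
    intro a b hab
    have hmk := SimpleGraph.ConnectedComponent.sound hab.reachable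
    by_cases ha : (compGraph E).connectedComponentMk a = C
    · have he := (compGraph_adj.1 hab).2
      simp only [f, ha, ← hmk, if_true, h.sign_eq_neg he ha,
        eq_neg_of_add_eq_zero_right (hy a b he)]
      ring
    · simp only [f, ha, ← hmk, if_false]
  have hv : (compGraph E).connectedComponentMk v = C :=
    (SimpleGraph.ConnectedComponent.sound huv).symm.trans hu
  simpa [f, hu, hv] using (huv.eq_of_forall_adj hf).symm

end Bipartite

section BipartiteKernel

variable {E : Finset (Sym2 V)}

noncomputable def bipartiteKernelMap (E : Finset (Sym2 V)) :
    LinearMap.ker (incMatrix ℝ E)ᵀ.mulVecLin →ₗ[ℝ] ({C // IsBipartiteComp E C} → ℝ) where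
  toFun y C := y.1 C.1.out * C.2.sign C.1.out
  map_add' y z := by ext C; simp [add_mul]
  map_smul' c y := by ext C; simp [mul_assoc]

theorem bipartiteKernelMap_injective : Function.Injective (bipartiteKernelMap E) := by
  rw [← LinearMap.ker_eq_bot, LinearMap.ker_eq_bot']
  intro y hy0
  have hy := mem_ker_transpose_incMatrix_iff.1 y.2
  ext v
  by_contra hv
  have hb := isBipartiteComp_of_ne_zero hy hv
  set C := (compGraph E).connectedComponentMk v
  have hout : y.1 C.out * hb.sign C.out = 0 := congrFun hy0 ⟨C, hb⟩
  have hvC := mul_sign_eq_of_reachable hy hb C.out_eq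
    (SimpleGraph.ConnectedComponent.exact C.out_eq)
  have hsign : hb.sign v ≠ 0 := left_ne_zero_of_mul_eq_one (hb.sign_mul_self v)
  exact hv (by simpa [hsign] using hvC.trans hout)

open Classical in
noncomputable def bipartiteKernelMk (t : {C // IsBipartiteComp E C} → ℝ) (v : V) : ℝ :=
  if h : IsBipartiteComp E ((compGraph E).connectedComponentMk v) then t ⟨_, h⟩ * h.sign v else 0

omit [Fintype V] [DecidableEq V] in
theorem bipartiteKernelMk_of_mk_eq (t : {C // IsBipartiteComp E C} → ℝ)
    {C : (compGraph E).ConnectedComponent} (h : IsBipartiteComp E C) {v : V}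
    (hv : (compGraph E).connectedComponentMk v = C) :
    bipartiteKernelMk t v = t ⟨C, h⟩ * h.sign v := by
  subst hv
  simp [bipartiteKernelMk, h]

omit [Fintype V] [DecidableEq V] in
theorem bipartiteKernelMk_add (t : {C // IsBipartiteComp E C} → ℝ) {u v : V}
    (he : s(u, v) ∈ E) : bipartiteKernelMk t u + bipartiteKernelMk t v = 0 := by
  have hmk := compGraph_mk_eq_of_mem he
  by_cases h : IsBipartiteComp E ((compGraph E).connectedComponentMk u)
  · rw [bipartiteKernelMk_of_mk_eq t h rfl, bipartiteKernelMk_of_mk_eq t h hmk.symm,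
      h.sign_eq_neg he rfl]
    ring
  · simp [bipartiteKernelMk, h, ← hmk]

theorem bipartiteKernelMap_surjective : Function.Surjective (bipartiteKernelMap E) := by
  intro t
  refine ⟨⟨bipartiteKernelMk t, mem_ker_transpose_incMatrix_iff.2 fun u v he =>
    bipartiteKernelMk_add t he⟩, funext fun C => ?_⟩
  simp [bipartiteKernelMap, bipartiteKernelMk_of_mk_eq t C.2 C.1.out_eq, mul_assoc,
    IsBipartiteComp.sign_mul_self]

theorem finrank_ker_transpose_incMatrix :
    Module.finrank ℝ (LinearMap.ker (incMatrix ℝ E)ᵀ.mulVecLin) = numBipComp E := by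
  have := Fintype.ofFinite {C // IsBipartiteComp E C}
  rw [(LinearEquiv.ofBijective _
      ⟨bipartiteKernelMap_injective, bipartiteKernelMap_surjective⟩).finrank_eq,
    Module.finrank_fintype_fun_eq_card, numBipComp, ← Nat.card_eq_fintype_card]
  rfl

end BipartiteKernel

section Polytope

variable {E : Finset (Sym2 V)}

theorem finrank_magicKernel_add_card :
    Module.finrank ℝ (magicKernel E) + Fintype.card V = #E + numBipComp E := by
  rw [(magicKernelEquiv E).finrank_eq, Matrix.finrank_ker_mulVecLin_add_card,
    finrank_ker_transpose_incMatrix, Fintype.card_coe, add_comm]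

theorem exists_rat_of_mem_extremePoints {x : Sym2 V → ℝ} (hx : x ∈ Set.extremePoints ℝ (PG E))
    (e : Sym2 V) : ∃ q : ℚ, x e = q := by
  classical
  set S := E.filter (x · ≠ 0)
  have hinj : Function.Injective (incMatrix ℝ S).mulVec := by
    refine fun d d' hdd' => sub_eq_zero.1 (funext fun c => ?_)
    have hker : incMatrix ℝ S *ᵥ (d - d') = 0 := by rw [mulVec_sub, hdd', sub_self]
    have hzero := eq_zero_of_mem_extremePoints hx (extend_mem_magicKernel (filter_subset _ E) hker)
      fun f hxf => Function.extend_val_apply_of_not _ _ fun hfS => (mem_filter.1 hfS).2 hxf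
    simpa [Subtype.val_injective.extend_apply] using congrFun hzero c
  have hsol : incMatrix ℝ S *ᵥ (fun e => x e) = fun _ => 1 := by
    funext v
    rw [incMatrix_mulVec, filter_comm, sum_filter_ne_zero, hx.1.2.2 v]
  obtain ⟨q, hq⟩ := (incMatrix ℚ S).exists_eq_comp_of_mulVec_eq (Rat.castHom ℝ) (fun _ => 1)
    (by rwa [incMatrix_map]) (by rw [incMatrix_map, hsol]; ext; simp)
  by_cases he : e ∈ S
  · exact ⟨q ⟨e, he⟩, congrFun hq ⟨e, he⟩⟩
  · refine ⟨0, ?_⟩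
    by_cases heE : e ∈ E
    · simpa [S, heE] using he
    · simp [hx.1.1 e heE]

end Polytope

/-- Let `G` be a finite positive graph with at least one edge.  Then `P_G` is a
rational polytope (all its vertices, i.e. extreme points, have rational
coordinates) of dimension `q - n + b`, where `q` is the number of edges, `n` the
number of vertices and `b` the number of bipartite connected components (the
dimension identity is stated additively to avoid natural subtraction). -/
theorem PG_rational_and_dimension (E : Finset (Sym2 V)) (hpos : IsPositive E)
    (hne : E.Nonempty) :
    (∀ x ∈ Set.extremePoints ℝ (PG E), ∀ e : Sym2 V, ∃ q : ℚ, x e = (q : ℝ)) ∧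
    Module.finrank ℝ (affineSpan ℝ (PG E)).direction + Fintype.card V =
      E.card + numBipComp E := by
  obtain ⟨x₀, hx₀, hx₀pos⟩ := hpos.exists_mem_PG_pos hne
  refine ⟨fun x hx => exists_rat_of_mem_extremePoints hx, ?_⟩
  rw [direction_affineSpan_PG hx₀ hx₀pos]
  exact finrank_magicKernel_add_card
end

section
/- Let G be a finite positive graph with n vertices, q edges, at least one edge, and b bipartite connected components. Then the d-dimensional faces of the polytope P_G are exactly the d-dimensional polytopes P_H of magic labelings of positive subgraphs H of G on the same n vertices with at most n - b + d edges (where P_H is embedded in P_G by labeling the edges of G not in H with zero). -/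
open Finset

variable {V : Type*} [Fintype V] [DecidableEq V]

/-- A face of a polytope `P`: either `P` itself, or the (nonempty) intersection of `P`
with a supporting hyperplane. -/
def IsFaceOf {W : Type*} [AddCommGroup W] [Module ℝ W] (F P : Set W) : Prop :=
  F = P ∨ ∃ (c : W →ₗ[ℝ] ℝ) (δ : ℝ), c ≠ 0 ∧ (∀ x ∈ P, c x ≤ δ) ∧
    (∃ x ∈ P, c x = δ) ∧ F = {x ∈ P | c x = δ}

/-!
Let `c ≤ δ` on `P_G` with equality somewhere, and let `H` be the set of edges that are positive
at some point of the face `F = {c = δ}`. Averaging gives `z ∈ F` positive on all of `H`; every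
`y ∈ P_H` can then be extended slightly beyond `z` inside `P_H`, and maximality of `c` at `z`
forces `c y = δ`, so `F = P_H`.

`H` is positive: `z` is a real combination of rational vectors satisfying every rational linear
relation satisfied by `z` (coordinates in a `ℚ`-basis of the span of its entries), so a nearby
rational point of `P_H` is still positive on `H`, and clearing denominators yields an integral
magic labeling.

Dimension: labelings supported on `H` with zero vertex sums lie in the direction of `P_H`, while
vertex sums of labelings on `H ⊆ G` are killed by the signed sums over the `b` bipartite
components of `G`, a surjection onto `ℝ^b`. Rank–nullity on `ℝ^H → ℝ^V` gives
`|H| ≤ (n - b) + d`.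
-/

open Module

theorem exists_decomposition_preserving_relations {K M ι : Type*} [Field K] [AddCommGroup M]
    [Module K M] [Fintype ι] (x : ι → M) :
    ∃ (n : ℕ) (β : Fin n → M) (a : Fin n → ι → K), (∀ i, x i = ∑ j, a j i • β j) ∧
      ∀ c : ι → K, ∑ i, c i • x i = 0 → ∀ j, ∑ i, c i * a j i = 0 := by
  let W := Submodule.span K (Set.range x)
  have : FiniteDimensional K W := FiniteDimensional.span_of_finite K (Set.finite_range x)
  let b := Module.finBasis K W
  let xW : ι → W := fun i => ⟨x i, Submodule.subset_span ⟨i, rfl⟩⟩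
  have hx : ∀ i, x i = ∑ j, b.repr (xW i) j • (b j : M) := fun i => by
    have := congrArg Subtype.val (b.sum_repr (xW i)).symm
    rwa [Submodule.coe_sum] at this
  refine ⟨_, fun j => b j, fun j i => b.repr (xW i) j, hx, fun c hc => ?_⟩
  refine Fintype.linearIndependent_iff.1 (b.linearIndependent.map' W.subtype W.ker_subtype) _ ?_
  calc ∑ j, (∑ i, c i * b.repr (xW i) j) • (b j : M) = ∑ i, c i • x i := by
        simp only [hx, Finset.smul_sum, smul_smul, Finset.sum_smul]
        exact Finset.sum_comm
    _ = 0 := hc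

theorem exists_rat_mem_preserving_relations {ι : Type*} [Fintype ι] {U : Set (ι → ℝ)}
    (hU : IsOpen U) {z : ι → ℝ} (hz : z ∈ U) :
    ∃ y : ι → ℚ, (fun i => (y i : ℝ)) ∈ U ∧
      ∀ c : ι → ℚ, ∑ i, (c i : ℝ) * z i = 0 → ∑ i, c i * y i = 0 := by
  obtain ⟨n, β, a, hz_eq, hrel⟩ := exists_decomposition_preserving_relations (K := ℚ) z
  let f : (Fin n → ℝ) → ι → ℝ := fun γ i => ∑ j, (a j i : ℝ) * γ j
  have hfβ : f β = z := funext fun i => by simp [f, hz_eq i, Rat.smul_def]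
  obtain ⟨q, hq⟩ := (DenseRange.piMap fun _ => Rat.denseRange_cast).exists_mem_open
    (hU.preimage (by fun_prop : Continuous f)) ⟨β, by simpa [hfβ] using hz⟩
  refine ⟨fun i => ∑ j, a j i * q j, by simpa [f] using hq, fun c hc => ?_⟩
  have hrel' := hrel c (by simpa [Rat.smul_def] using hc)
  calc ∑ i, c i * ∑ j, a j i * q j = ∑ j, (∑ i, c i * a j i) * q j := by
        simp only [Finset.mul_sum, Finset.sum_mul, mul_assoc]
        exact Finset.sum_comm
    _ = 0 := by simp [hrel']

theorem exists_pos_nat_mul_eq_natCast {ι : Type*} [Fintype ι] (y : ι → ℚ) (hy : ∀ i, 0 ≤ y i) :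
    ∃ N : ℕ, 0 < N ∧ ∃ L : ι → ℕ, ∀ i, (L i : ℚ) = N * y i := by
  refine ⟨∏ i, (y i).den, Finset.prod_pos fun i _ => (y i).den_pos, ?_⟩
  have (i : ι) : ∃ l : ℕ, (l : ℚ) = (∏ i, (y i).den : ℕ) * y i := by
    obtain ⟨k, hk⟩ := Finset.dvd_prod_of_mem (fun i => (y i).den) (Finset.mem_univ i)
    have hnum : ((y i).num.toNat : ℚ) = (y i).num := by
      exact_mod_cast Int.toNat_of_nonneg (Rat.num_nonneg.2 (hy i))
    refine ⟨k * (y i).num.toNat, ?_⟩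
    rw [hk, Nat.cast_mul, Nat.cast_mul, hnum, ← Rat.mul_den_eq_num]
    ring
  choose L hL using this
  exact ⟨L, hL⟩

theorem Convex.exists_forall_pos {𝕜 ι : Type*} [Field 𝕜] [LinearOrder 𝕜] [IsStrictOrderedRing 𝕜]
    {F : Set (ι → 𝕜)} (hconv : Convex 𝕜 F) (hne : F.Nonempty) (hnn : ∀ x ∈ F, ∀ i, 0 ≤ x i)
    (s : Finset ι) (hs : ∀ i ∈ s, ∃ x ∈ F, 0 < x i) : ∃ z ∈ F, ∀ i ∈ s, 0 < z i := by
  classical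
  induction s using Finset.induction_on with
  | empty => exact hne.imp fun z hz => ⟨hz, by simp⟩
  | insert i s _ ih =>
    obtain ⟨z, hzF, hz⟩ := ih fun j hj => hs j (Finset.mem_insert_of_mem hj)
    obtain ⟨x, hxF, hx⟩ := hs i (Finset.mem_insert_self i s)
    refine ⟨(1 / 2 : 𝕜) • z + (1 / 2 : 𝕜) • x, hconv hzF hxF (by norm_num) (by norm_num)
      (by norm_num), fun j hj => ?_⟩
    have := hnn z hzF j
    have := hnn x hxF j
    rcases Finset.mem_insert.1 hj with rfl | hj
    · simp only [Pi.add_apply, Pi.smul_apply, smul_eq_mul]; linarith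
    · have := hz j hj
      simp only [Pi.add_apply, Pi.smul_apply, smul_eq_mul]; linarith

theorem IsFaceOf.exists_supporting {W : Type*} [AddCommGroup W] [Module ℝ W] {F P : Set W}
    (h : IsFaceOf F P) (hP : P.Nonempty) :
    ∃ (c : W →ₗ[ℝ] ℝ) (δ : ℝ), (∀ x ∈ P, c x ≤ δ) ∧ (∃ x ∈ P, c x = δ) ∧
      F = {x ∈ P | c x = δ} := by
  rcases h with rfl | ⟨c, δ, -, hsupp, hmax, rfl⟩
  · obtain ⟨x, hx⟩ := hP
    exact ⟨0, 0, fun _ _ => le_rfl, ⟨x, hx, rfl⟩, by simp⟩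
  · exact ⟨c, δ, hsupp, hmax, rfl⟩

section MagicPolytope

omit [Fintype V]

variable {E E' : Finset (Sym2 V)}

theorem sum_filter_mem_eq_of_subset {M : Type*} [AddCommMonoid M] (h : E' ⊆ E)
    {x : Sym2 V → M} (hx : ∀ e ∉ E', x e = 0) (v : V) :
    ∑ e ∈ E with v ∈ e, x e = ∑ e ∈ E' with v ∈ e, x e :=
  (Finset.sum_subset (Finset.filter_subset_filter _ h) fun e he he' =>
    hx e fun heE' => he' (Finset.mem_filter.2 ⟨heE', (Finset.mem_filter.1 he).2⟩)).symm

theorem mem_PG_iff_of_subset (h : E' ⊆ E) {x : Sym2 V → ℝ} :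
    x ∈ PG E' ↔ x ∈ PG E ∧ ∀ e ∉ E', x e = 0 := by
  constructor
  · intro hx
    refine ⟨⟨fun e he => hx.1 e fun he' => he (h he'), hx.2.1, fun v => ?_⟩, hx.1⟩
    rw [sum_filter_mem_eq_of_subset h hx.1, hx.2.2]
  · rintro ⟨hx, hx0⟩
    refine ⟨hx0, hx.2.1, fun v => ?_⟩
    rw [← sum_filter_mem_eq_of_subset h hx0, hx.2.2]

theorem PG_mono (h : E' ⊆ E) : PG E' ⊆ PG E := fun _ hx => ((mem_PG_iff_of_subset h).1 hx).1

theorem convex_PG (E : Finset (Sym2 V)) : Convex ℝ (PG E) := by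
  rintro x ⟨hx0, hxnn, hxs⟩ y ⟨hy0, hynn, hys⟩ a b ha hb hab
  refine ⟨fun e he => by simp [hx0 e he, hy0 e he], fun e => ?_, fun v => ?_⟩
  · simp only [Pi.add_apply, Pi.smul_apply, smul_eq_mul]
    have := hxnn e; have := hynn e; positivity
  · simp only [Pi.add_apply, Pi.smul_apply, smul_eq_mul]
    rw [Finset.sum_add_distrib, ← Finset.mul_sum, ← Finset.mul_sum, hxs v, hys v, mul_one,
      mul_one, hab]

theorem exists_add_smul_mem_PG {z u : Sym2 V → ℝ} (hz : z ∈ PG E) (hzpos : ∀ e ∈ E, 0 < z e)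
    (hu : ∀ e ∉ E, u e = 0) (husum : ∀ v, ∑ e ∈ E with v ∈ e, u e = 0) :
    ∃ t : ℝ, 0 < t ∧ z + t • u ∈ PG E := by
  have hsmall : ∀ᶠ t in nhds (0 : ℝ), ∀ e ∈ E, 0 < z e + t * u e :=
    (Filter.eventually_all_finset E).2 fun e he =>
      Filter.Tendsto.eventually_const_lt (by simpa using hzpos e he)
        ((by fun_prop : Continuous fun t : ℝ => z e + t * u e).tendsto 0)
  obtain ⟨t, ht, htpos⟩ :=
    ((hsmall.filter_mono nhdsWithin_le_nhds).and (self_mem_nhdsWithin (s := Set.Ioi 0))).exists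
  refine ⟨t, htpos, fun e he => by simp [hz.1 e he, hu e he], fun e => ?_, fun v => ?_⟩
  · by_cases he : e ∈ E
    · exact (ht e he).le
    · simp [hz.1 e he, hu e he]
  · simp only [Pi.add_apply, Pi.smul_apply]
    rw [Finset.sum_add_distrib, ← Finset.smul_sum, hz.2.2 v, husum v, smul_zero, add_zero]

theorem mem_direction_affineSpan_PG {z u : Sym2 V → ℝ} (hz : z ∈ PG E)
    (hzpos : ∀ e ∈ E, 0 < z e) (hu : ∀ e ∉ E, u e = 0)
    (husum : ∀ v, ∑ e ∈ E with v ∈ e, u e = 0) : u ∈ (affineSpan ℝ (PG E)).direction := by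
  obtain ⟨t, ht, hmem⟩ := exists_add_smul_mem_PG hz hzpos hu husum
  have := AffineSubspace.vsub_mem_direction (subset_affineSpan ℝ _ hmem) (subset_affineSpan ℝ _ hz)
  rwa [vsub_eq_sub, add_sub_cancel_left, Submodule.smul_mem_iff _ ht.ne'] at this

theorem IsPositive.PG_nonempty (hpos : IsPositive E) (hne : E.Nonempty) : (PG E).Nonempty := by
  obtain ⟨e, he⟩ := hne
  obtain ⟨L, r, ⟨hL0, hLsum⟩, hLe⟩ := hpos e he
  have hr : 0 < r := hLsum e.out.1 ▸ hLe.trans_le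
    (Finset.single_le_sum (fun _ _ => Nat.zero_le _) (Finset.mem_filter.2 ⟨he, e.out_fst_mem⟩))
  refine ⟨fun e => L e / r, fun e he => by simp [hL0 e he], fun e => by positivity, fun v => ?_⟩
  rw [← Finset.sum_div, ← Nat.cast_sum, hLsum v, div_self (by positivity)]

theorem exists_PG_eq_of_supporting {c : (Sym2 V → ℝ) →ₗ[ℝ] ℝ} {δ : ℝ}
    (hsupp : ∀ x ∈ PG E, c x ≤ δ) (hmax : ∃ x ∈ PG E, c x = δ) :
    ∃ E' ⊆ E, ∃ z ∈ PG E', (∀ e ∈ E', 0 < z e) ∧ {x ∈ PG E | c x = δ} = PG E' := by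
  classical
  set F := {x ∈ PG E | c x = δ}
  set E' := E.filter fun e => ∃ x ∈ F, 0 < x e
  have hE' : E' ⊆ E := Finset.filter_subset _ _
  have hF_zero (x : Sym2 V → ℝ) (hx : x ∈ F) (e : Sym2 V) (he : e ∉ E') : x e = 0 := by
    by_cases heE : e ∈ E
    · exact ((hx.1.2.1 e).eq_or_lt.resolve_right
        fun hpos => he (Finset.mem_filter.2 ⟨heE, x, hx, hpos⟩)).symm
    · exact hx.1.1 e heE
  obtain ⟨z, hzF, hzpos⟩ := ((convex_PG E).inter (convex_hyperplane c.isLinear δ)).exists_forall_pos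
    hmax (fun x hx => hx.1.2.1) E' fun e he => (Finset.mem_filter.1 he).2
  have hz : z ∈ PG E' := (mem_PG_iff_of_subset hE').2 ⟨hzF.1, hF_zero z hzF⟩
  refine ⟨E', hE', z, hz, hzpos, Set.Subset.antisymm
    (fun x hx => (mem_PG_iff_of_subset hE').2 ⟨hx.1, hF_zero x hx⟩) fun y hy => ?_⟩
  obtain ⟨t, ht, hw⟩ := exists_add_smul_mem_PG (u := z - y) hz hzpos
    (fun e he => by simp [hz.1 e he, hy.1 e he])
    fun v => by simp [Finset.sum_sub_distrib, hz.2.2 v, hy.2.2 v]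
  have hcw := hsupp _ (PG_mono hE' hw)
  have hcy := hsupp y (PG_mono hE' hy)
  have hcz : c z = δ := hzF.2
  simp only [map_add, map_smul, map_sub, smul_eq_mul, hcz] at hcw
  exact ⟨PG_mono hE' hy, le_antisymm hcy (by nlinarith)⟩

theorem PG_isFaceOf {E' : Finset (Sym2 V)} (h : E' ⊆ E) (hne : (PG E').Nonempty) :
    IsFaceOf (PG E') (PG E) := by
  by_cases hEE : E' = E
  · exact Or.inl (by rw [hEE])
  obtain ⟨e₀, he₀⟩ : (E \ E').Nonempty :=
    Finset.sdiff_nonempty.2 fun h' => hEE (Finset.Subset.antisymm h h')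
  let c : (Sym2 V → ℝ) →ₗ[ℝ] ℝ := -∑ e ∈ E \ E', LinearMap.proj e
  have hc (x : Sym2 V → ℝ) : c x = -∑ e ∈ E \ E', x e := by simp [c]
  have hPG (x : Sym2 V → ℝ) (hx : x ∈ PG E) : x ∈ PG E' ↔ c x = 0 := by
    rw [mem_PG_iff_of_subset h, hc, neg_eq_zero,
      Finset.sum_eq_zero_iff_of_nonneg fun e _ => hx.2.1 e]
    refine ⟨fun hx' e he => hx'.2 e (Finset.mem_sdiff.1 he).2, fun hx' => ⟨hx, fun e he => ?_⟩⟩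
    by_cases heE : e ∈ E
    · exact hx' e (Finset.mem_sdiff.2 ⟨heE, he⟩)
    · exact hx.1 e heE
  refine Or.inr ⟨c, 0, fun h0 => ?_, fun x hx => ?_, ?_, ?_⟩
  · have := LinearMap.congr_fun h0 (Pi.single e₀ 1)
    simp [hc, Finset.sum_pi_single', he₀] at this
  · rw [hc, neg_nonpos]
    exact Finset.sum_nonneg fun e _ => hx.2.1 e
  · obtain ⟨x, hx⟩ := hne
    exact ⟨x, PG_mono h hx, (hPG x (PG_mono h hx)).1 hx⟩
  · ext x
    exact ⟨fun hx => ⟨PG_mono h hx, (hPG x (PG_mono h hx)).1 hx⟩,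
      fun hx => (hPG x hx.1).2 hx.2⟩

end MagicPolytope

section Positivity

variable {E : Finset (Sym2 V)}

theorem sum_incidence_mul {R : Type*} [NonAssocSemiring R] (E : Finset (Sym2 V)) (v : V)
    (x : Sym2 V → R) :
    ∑ e, (if e ∈ E ∧ v ∈ e then 1 else 0) * x e = ∑ e ∈ E with v ∈ e, x e := by
  simp [Finset.sum_filter, ite_and, Finset.sum_ite_mem]

theorem isPositive_of_rat (y : Sym2 V → ℚ) (hy0 : ∀ e ∉ E, y e = 0) (hypos : ∀ e ∈ E, 0 < y e)
    (hysum : ∀ v w : V, ∑ e ∈ E with v ∈ e, y e = ∑ e ∈ E with w ∈ e, y e) : IsPositive E := by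
  have hynn (e : Sym2 V) : 0 ≤ y e := by
    by_cases he : e ∈ E
    · exact (hypos e he).le
    · rw [hy0 e he]
  obtain ⟨N, hN, L, hL⟩ := exists_pos_nat_mul_eq_natCast y hynn
  have hLsum (w : V) : ((∑ e ∈ E with w ∈ e, L e : ℕ) : ℚ) = N * ∑ e ∈ E with w ∈ e, y e := by
    rw [Nat.cast_sum, Finset.mul_sum]
    exact Finset.sum_congr rfl fun e _ => hL e
  intro e he
  refine ⟨L, ∑ e' ∈ E with e.out.1 ∈ e', L e', ⟨fun e' he' => ?_, fun v => ?_⟩, ?_⟩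
  · have : (L e' : ℚ) = 0 := by rw [hL e', hy0 e' he', mul_zero]
    exact_mod_cast this
  · have := hLsum v
    rw [hysum v e.out.1, ← hLsum] at this
    exact_mod_cast this
  · have : (0 : ℚ) < L e := (hL e).symm ▸ mul_pos (Nat.cast_pos.2 hN) (hypos e he)
    exact_mod_cast this

theorem isPositive_of_mem_PG {z : Sym2 V → ℝ} (hz : z ∈ PG E) (hzpos : ∀ e ∈ E, 0 < z e) :
    IsPositive E := by
  have hU : IsOpen {x : Sym2 V → ℝ | ∀ e ∈ E, 0 < x e} := by
    simp only [Set.ofPred_forall]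
    exact isOpen_biInter_finset fun e _ => isOpen_lt continuous_const (continuous_apply e)
  obtain ⟨y, hyU, hrel⟩ := exists_rat_mem_preserving_relations hU hzpos
  refine isPositive_of_rat y (fun e he => ?_) (fun e he => Rat.cast_pos.1 (hyU e he))
    fun v w => ?_
  · have hze : ∑ i, ((Pi.single e 1 : Sym2 V → ℚ) i : ℝ) * z i = 0 := by
      simpa [Pi.single_apply, apply_ite (Rat.cast : ℚ → ℝ)] using hz.1 e he
    simpa [Pi.single_apply] using hrel (Pi.single e 1) hze
  · have := hrel (fun e => (if e ∈ E ∧ v ∈ e then 1 else 0) - (if e ∈ E ∧ w ∈ e then 1 else 0))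
      (by simp only [Rat.cast_sub, apply_ite (Rat.cast : ℚ → ℝ), Rat.cast_one, Rat.cast_zero,
        sub_mul, Finset.sum_sub_distrib, sum_incidence_mul, hz.2.2, sub_self])
    simp only [sub_mul, Finset.sum_sub_distrib, sum_incidence_mul] at this
    exact sub_eq_zero.1 this

end Positivity

section BipartiteComponents

open Matrix

variable (E : Finset (Sym2 V))

abbrev BipComp : Type _ :=
  {C : (compGraph E).ConnectedComponent // ∃ c : V → Bool, ∀ u v : V, s(u, v) ∈ E →
      (compGraph E).connectedComponentMk u = C → c u ≠ c v}

noncomputable instance : Fintype (BipComp E) := Fintype.ofFinite _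

open Classical in
noncomputable def bipSign : Matrix (BipComp E) V ℝ :=
  Matrix.of fun C v =>
    if (compGraph E).connectedComponentMk v = C.1 then (if C.2.choose v then 1 else -1) else 0

noncomputable def vertexSums : (Sym2 V → ℝ) →ₗ[ℝ] V → ℝ :=
  LinearMap.pi fun v => ∑ e ∈ E with v ∈ e, LinearMap.proj e

variable {E}

omit [Fintype V] in
theorem vertexSums_apply (x : Sym2 V → ℝ) (v : V) :
    vertexSums E x v = ∑ e ∈ E with v ∈ e, x e := by
  simp [vertexSums]

omit [Fintype V] in
theorem connectedComponentMk_eq_of_mem {a b : V} (h : s(a, b) ∈ E) :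
    (compGraph E).connectedComponentMk a = (compGraph E).connectedComponentMk b := by
  by_cases hab : a = b
  · rw [hab]
  · exact SimpleGraph.ConnectedComponent.connectedComponentMk_eq_of_adj
      (by simpa [compGraph] using ⟨hab, Or.inl h⟩)

omit [Fintype V] [DecidableEq V] in
theorem bipSign_mul_self {C : BipComp E} {v : V} (hv : (compGraph E).connectedComponentMk v = C.1) :
    bipSign E C v * bipSign E C v = 1 := by
  simp only [bipSign, of_apply, hv, if_true]
  split_ifs <;> norm_num

omit [Fintype V] in
theorem sum_bipSign_eq_zero (C : BipComp E) {e : Sym2 V} (he : e ∈ E) :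
    ∑ v ∈ e.toFinset, bipSign E C v = 0 := by
  induction e using Sym2.ind with
  | _ a b =>
  have hcol := C.2.choose_spec a b he
  by_cases hab : a = b
  · subst hab
    have : (compGraph E).connectedComponentMk a ≠ C.1 := fun h => hcol h rfl
    simp [Sym2.toFinset_mk_eq, bipSign, this]
  · rw [Sym2.toFinset_mk_eq, Finset.sum_pair hab]
    by_cases ha : (compGraph E).connectedComponentMk a = C.1
    · have hb := (connectedComponentMk_eq_of_mem he).symm.trans ha
      have := hcol ha
      simp only [bipSign, of_apply, ha, hb, if_true]
      revert this
      cases C.2.choose a <;> cases C.2.choose b <;> norm_num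
    · have hb : (compGraph E).connectedComponentMk b ≠ C.1 :=
        fun hb => ha ((connectedComponentMk_eq_of_mem he).trans hb)
      simp [bipSign, ha, hb]

theorem bipSign_mulVec_vertexSums {E' : Finset (Sym2 V)} (h : E' ⊆ E) (y : Sym2 V → ℝ) :
    bipSign E *ᵥ vertexSums E' y = 0 := by
  funext C
  simp only [Matrix.mulVec, dotProduct, vertexSums_apply, Finset.mul_sum, Pi.zero_apply]
  rw [Finset.sum_comm' (t' := E') (s' := fun e => e.toFinset) (by simp [and_comm])]
  refine Finset.sum_eq_zero fun e he => ?_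
  rw [← Finset.sum_mul, sum_bipSign_eq_zero C (h he), zero_mul]

theorem bipSign_mulVecLin_surjective : Function.Surjective (bipSign E).mulVecLin := by
  choose rep hrep using fun C : BipComp E => C.1.exists_rep
  intro h
  refine ⟨∑ C, Pi.single (rep C) (h C * bipSign E C (rep C)), funext fun C' => ?_⟩
  have hsingle (v : V) (x : ℝ) : (bipSign E *ᵥ Pi.single v x) C' = bipSign E C' v * x :=
    dotProduct_single _ _ _
  rw [mulVecLin_apply, mulVec_sum, Finset.sum_apply, Finset.sum_eq_single C' (fun C _ hC => ?_)
    (by simp), hsingle, mul_left_comm, bipSign_mul_self (hrep C'), mul_one]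
  have : (compGraph E).connectedComponentMk (rep C) ≠ C'.1 :=
    fun h' => hC (Subtype.ext ((hrep C).symm.trans h'))
  simp [bipSign, this]

theorem finrank_ker_add_numBipComp :
    finrank ℝ (LinearMap.ker (bipSign E).mulVecLin) + numBipComp E = Fintype.card V := by
  have := LinearMap.finrank_range_add_finrank_ker (bipSign E).mulVecLin
  rw [LinearMap.range_eq_top.2 bipSign_mulVecLin_surjective, finrank_top,
    finrank_fintype_fun_eq_card, finrank_fintype_fun_eq_card] at this
  have hb : numBipComp E = Fintype.card (BipComp E) := Nat.card_eq_fintype_card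
  omega

theorem card_add_numBipComp_le {E' : Finset (Sym2 V)} (h : E' ⊆ E) {z : Sym2 V → ℝ}
    (hz : z ∈ PG E') (hzpos : ∀ e ∈ E', 0 < z e) :
    E'.card + numBipComp E ≤ Fintype.card V + finrank ℝ (affineSpan ℝ (PG E')).direction := by
  let extend := Function.ExtendByZero.linearMap ℝ (Subtype.val : E' → Sym2 V)
  have extend_injective : Function.Injective extend :=
    Function.extend_injective Subtype.val_injective (0 : Sym2 V → ℝ)
  have extend_of_not_mem (g : E' → ℝ) {e : Sym2 V} (he : e ∉ E') : extend g e = 0 :=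
    Function.extend_apply' _ _ _ fun ⟨a, ha⟩ => he (ha ▸ a.2)
  let T := (vertexSums E').comp extend
  have h_range : finrank ℝ (LinearMap.range T) ≤ finrank ℝ (LinearMap.ker (bipSign E).mulVecLin) :=
    Submodule.finrank_mono fun _ ⟨g, hg⟩ => hg ▸ bipSign_mulVec_vertexSums h (extend g)
  have h_ker : finrank ℝ (LinearMap.ker T) ≤ finrank ℝ (affineSpan ℝ (PG E')).direction := by
    refine LinearMap.finrank_le_finrank_of_injective (f := (extend.domRestrict _).codRestrict _
      fun g => mem_direction_affineSpan_PG hz hzpos (fun e he => extend_of_not_mem g he)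
        fun v => by rw [← vertexSums_apply]; exact congrFun (LinearMap.mem_ker.1 g.2) v) ?_
    exact fun g g' hgg' => Subtype.ext (extend_injective (congrArg Subtype.val hgg'))
  have := T.finrank_range_add_finrank_ker
  rw [finrank_fintype_fun_eq_card, Fintype.card_coe] at this
  have := finrank_ker_add_numBipComp (E := E)
  omega

end BipartiteComponents

/-- Let `G` be a finite positive graph with `n` vertices, `q` edges, at least one edge
and `b` bipartite connected components.  The `d`-dimensional faces of `P_G` are exactly
the `d`-dimensional (nonempty) polytopes `P_H` of magic labelings of positive subgraphs
`H` of `G` on the same vertices with at most `n - b + d` edges (stated additively as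
`|E'| + b ≤ n + d`), where `P_H` is embedded in `P_G` by labeling the edges of `G` not
in `H` with zero. -/
theorem PG_faces (E : Finset (Sym2 V)) (hpos : IsPositive E) (hne : E.Nonempty)
    (d : ℕ) (F : Set (Sym2 V → ℝ)) :
    (IsFaceOf F (PG E) ∧ Module.finrank ℝ (affineSpan ℝ F).direction = d) ↔
    (∃ E' ⊆ E, IsPositive E' ∧ E'.card + numBipComp E ≤ Fintype.card V + d ∧
      (PG E').Nonempty ∧ Module.finrank ℝ (affineSpan ℝ (PG E')).direction = d ∧
      F = PG E') := by
  constructor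
  · rintro ⟨hface, rfl⟩
    obtain ⟨c, δ, hsupp, hmax, rfl⟩ := hface.exists_supporting (hpos.PG_nonempty hne)
    obtain ⟨E', hE', z, hz, hzpos, hF⟩ := exists_PG_eq_of_supporting hsupp hmax
    rw [hF]
    exact ⟨E', hE', isPositive_of_mem_PG hz hzpos, card_add_numBipComp_le hE' hz hzpos, ⟨z, hz⟩,
      rfl, rfl⟩
  · rintro ⟨E', hE', -, -, hne', rfl, rfl⟩
    exact ⟨PG_isFaceOf hE' hne', rfl⟩
end

section
/- For every vertex v of the polytope P_G of magic labelings of a finite graph G, the labeling 2v assigns a nonnegative integer to each edge of G; that is, every vertex of P_G is one half of an integral magic labeling of G of magic sum 2. -/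
open Finset

variable {V : Type*} [Fintype V] [DecidableEq V]

/-! A point of `PG univ` (the complete graph with loops) is the same thing as a symmetric doubly
stochastic matrix, so by Birkhoff's theorem `PG univ` is the convex hull of the symmetrized
permutation matrices `(P_σ + P_σᵀ) / 2`, whose entries lie in `{0, 1/2, 1}`. For a general edge
set `E`, `PG E` is the face of `PG univ` where the labels of the non-edges vanish, so its
vertices are vertices of `PG univ`, hence among these half-integral points. -/

theorem sum_filter_mem_eq_sum_mk {M : Type*} [AddCommMonoid M] (y : Sym2 V → M) (v : V) :
    ∑ e with v ∈ e, y e = ∑ u, y s(v, u) := by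
  have himage : univ.image (fun u => s(v, u)) = ({e | v ∈ e} : Finset (Sym2 V)) := by
    ext e
    simp only [mem_image, mem_univ, true_and, mem_filter, Sym2.mem_iff_exists, eq_comm]
  rw [← himage, sum_image fun a _ b _ h => Sym2.congr_right.1 h]

theorem sum_filter_mem_eq_of_eq_zero {M : Type*} [AddCommMonoid M] {E : Finset (Sym2 V)}
    {y : Sym2 V → M} (hy : ∀ e ∉ E, y e = 0) (v : V) :
    ∑ e ∈ E with v ∈ e, y e = ∑ e with v ∈ e, y e :=
  sum_subset (filter_subset_filter _ (subset_univ E)) fun e he heE =>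
    hy e fun h => heE (mem_filter.2 ⟨h, (mem_filter.1 he).2⟩)

theorem mem_PG_iff_mem_PG_univ {E : Finset (Sym2 V)} {y : Sym2 V → ℝ}
    (hy : ∀ e ∉ E, y e = 0) : y ∈ PG E ↔ y ∈ PG univ := by
  simp only [PG, Set.mem_ofPred_eq, sum_filter_mem_eq_of_eq_zero hy, mem_univ,
    not_true_eq_false, IsEmpty.forall_iff, implies_true, true_and]
  exact and_iff_right hy

theorem isExtreme_PG_univ_PG (E : Finset (Sym2 V)) : IsExtreme ℝ (PG univ) (PG E) := by
  refine ⟨fun x hx => (mem_PG_iff_mem_PG_univ hx.1).1 hx, ?_⟩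
  rintro x₁ hx₁ x₂ hx₂ x hx ⟨a, b, ha, hb, -, rfl⟩
  refine (mem_PG_iff_mem_PG_univ fun e he => ?_).2 hx₁
  have hsum : a * x₁ e + b * x₂ e = 0 := by simpa using hx.1 e he
  nlinarith [hx₁.2.1 e, hx₂.2.1 e]

def labelMatrix (x : Sym2 V → ℝ) : Matrix V V ℝ := Matrix.of fun u w => x s(u, w)

theorem labelMatrix_mem_doublyStochastic {x : Sym2 V → ℝ} (hx : x ∈ PG univ) :
    labelMatrix x ∈ doublyStochastic ℝ V := by
  have hrow : ∀ u, ∑ w, labelMatrix x u w = 1 := fun u => by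
    simpa [labelMatrix, sum_filter_mem_eq_sum_mk] using hx.2.2 u
  refine mem_doublyStochastic_iff_sum.2 ⟨fun _ _ => hx.2.1 _, hrow, fun w => ?_⟩
  simpa only [labelMatrix, Matrix.of_apply, Sym2.eq_swap] using hrow w

noncomputable def symmetrize : Matrix V V ℝ →ₗ[ℝ] Sym2 V → ℝ where
  toFun A := Sym2.lift ⟨fun u w => (A u w + A w u) / 2, fun u w => by simp only [add_comm]⟩
  map_add' A B := by
    ext e
    induction e using Sym2.ind
    simp only [Sym2.lift_mk, Matrix.add_apply, Pi.add_apply]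
    ring
  map_smul' c A := by
    ext e
    induction e using Sym2.ind
    simp only [Sym2.lift_mk, Matrix.smul_apply, smul_eq_mul, RingHom.id_apply, Pi.smul_apply]
    ring

omit [Fintype V] [DecidableEq V] in
theorem symmetrize_mk (A : Matrix V V ℝ) (u w : V) :
    symmetrize A s(u, w) = (A u w + A w u) / 2 := rfl

omit [Fintype V] [DecidableEq V] in
theorem symmetrize_labelMatrix (x : Sym2 V → ℝ) : symmetrize (labelMatrix x) = x := by
  ext e
  induction e using Sym2.ind
  simp only [symmetrize_mk, labelMatrix, Matrix.of_apply, Sym2.eq_swap]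
  ring

theorem symmetrize_mem_PG_univ {A : Matrix V V ℝ} (hA : A ∈ doublyStochastic ℝ V) :
    symmetrize A ∈ PG univ := by
  refine ⟨by simp, fun e => ?_, fun v => ?_⟩
  · induction e using Sym2.ind with
    | _ u w =>
      have := nonneg_of_mem_doublyStochastic hA (i := u) (j := w)
      have := nonneg_of_mem_doublyStochastic hA (i := w) (j := u)
      rw [symmetrize_mk]
      positivity
  · simp_rw [sum_filter_mem_eq_sum_mk, symmetrize_mk, ← sum_div, sum_add_distrib,
      sum_row_of_mem_doublyStochastic hA, sum_col_of_mem_doublyStochastic hA]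
    norm_num

/-- Birkhoff's theorem, transported to symmetric matrices by `symmetrize`. -/
theorem PG_univ_eq_convexHull :
    PG (univ : Finset (Sym2 V)) =
      convexHull ℝ (Set.range fun σ : Equiv.Perm V => symmetrize (σ.permMatrix ℝ)) := by
  have hPG : PG (univ : Finset (Sym2 V)) = symmetrize '' doublyStochastic ℝ V :=
    le_antisymm
      (fun x hx => ⟨labelMatrix x, labelMatrix_mem_doublyStochastic hx, symmetrize_labelMatrix x⟩)
      (Set.image_subset_iff.2 fun A hA => symmetrize_mem_PG_univ hA)
  rw [hPG, doublyStochastic_eq_convexHull_permMatrix, LinearMap.image_convexHull]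
  exact congrArg _ (Set.range_comp _ _).symm

omit [Fintype V] in
theorem symmetrize_permMatrix_half_integral (σ : Equiv.Perm V) (e : Sym2 V) :
    ∃ n : ℕ, symmetrize (σ.permMatrix ℝ) e = n / 2 := by
  induction e using Sym2.ind with
  | _ a b =>
    refine ⟨(if σ a = b then 1 else 0) + (if σ b = a then 1 else 0), ?_⟩
    simp [symmetrize_mk, PEquiv.toMatrix_apply, Equiv.toPEquiv_apply]

omit [Fintype V] in
theorem exists_isMagic_two_of_half_integral {E : Finset (Sym2 V)} {x : Sym2 V → ℝ}
    (hx : x ∈ PG E) (hhalf : ∀ e, ∃ n : ℕ, x e = n / 2) :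
    ∃ L : Sym2 V → ℕ, IsMagic E L 2 ∧ ∀ e, x e = (L e : ℝ) / 2 := by
  choose L hL using hhalf
  refine ⟨L, ⟨fun e he => ?_, fun v => ?_⟩, hL⟩
  · have : (L e : ℝ) / 2 = 0 := hL e ▸ hx.1 e he
    exact_mod_cast (div_eq_zero_iff.1 this).resolve_right two_ne_zero
  · have : (∑ e ∈ E with v ∈ e, (L e : ℝ)) = 2 := by
      have hL' : ∀ e, (L e : ℝ) = 2 * x e := fun e => by rw [hL]; ring
      rw [sum_congr rfl fun e _ => hL' e, ← mul_sum, hx.2.2 v, mul_one]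
    exact_mod_cast this

/-- Every vertex (extreme point) `x` of the polytope `P_G` of magic labelings of a
finite graph `G` is one half of an integral magic labeling of `G` of magic sum `2`:
`2 • x` assigns a nonnegative integer to each edge. -/
theorem PG_vertices_half_integral (E : Finset (Sym2 V)) (x : Sym2 V → ℝ)
    (hx : x ∈ Set.extremePoints ℝ (PG E)) :
    ∃ L : Sym2 V → ℕ, IsMagic E L 2 ∧ ∀ e : Sym2 V, x e = (L e : ℝ) / 2 := by
  have hx_univ := (isExtreme_PG_univ_PG E).extremePoints_subset_extremePoints hx
  rw [PG_univ_eq_convexHull] at hx_univ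
  obtain ⟨σ, rfl⟩ := extremePoints_convexHull_subset hx_univ
  exact exists_isMagic_two_of_half_integral hx.1 (symmetrize_permMatrix_half_integral σ)
end

section
/- Let D be a digraph. Every magic labeling of D of magic sum r can be written as a sum of r magic labelings of D of magic sum 1. In particular, every irreducible magic labeling of D has magic sum 1. -/
open Finset

variable {V : Type*} [Fintype V] [DecidableEq V]

/-- A magic labeling of the digraph with vertex set `V` and edge set `E ⊆ V × V`,
of magic sum `r`. -/
def IsMagicD (E : Finset (V × V)) (L : V × V → ℕ) (r : ℕ) : Prop :=
  (∀ e, e ∉ E → L e = 0) ∧ (∀ v : V, ∑ e ∈ E with e.1 = v, L e = r) ∧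
    (∀ v : V, ∑ e ∈ E with e.2 = v, L e = r)

/-- `L` is a magic labeling (of some magic sum) of the digraph with edge set `E`. -/
def IsMagicLabelingD (E : Finset (V × V)) (L : V × V → ℕ) : Prop :=
  ∃ r : ℕ, IsMagicD E L r

/-- An irreducible magic labeling of a digraph: a nonzero magic labeling that is not
the sum of two nonzero magic labelings (sums taken edgewise). -/
def IsIrreducibleMagicD (E : Finset (V × V)) (L : V × V → ℕ) : Prop :=
  IsMagicLabelingD E L ∧ L ≠ 0 ∧
    ∀ L₁ L₂ : V × V → ℕ, IsMagicLabelingD E L₁ → IsMagicLabelingD E L₂ →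
      L₁ ≠ 0 → L₂ ≠ 0 → L ≠ L₁ + L₂

/-!
Reading a labeling `L` as the `V × V` matrix `(v, w) ↦ L (v, w)`, a magic labeling of sum `r`
is an `ℕ`-matrix with all row and column sums `r`, supported on `E`. If `r > 0`, the neighbourhood
of any set `S` of rows in the support carries the whole mass `#S * r` of those rows, so it has at
least `#S` columns; by Hall's theorem the support contains a permutation `σ`. The permutation
matrix of `σ` is then a magic labeling of sum `1` below `L`, and subtracting it lowers the magic
sum by one. For `r ≥ 2` this splits `L` into two nonzero magic labelings, so irreducible ones have
sum `1`.
-/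

theorem Matrix.exists_perm_forall_ne_zero {R : Type*} [Semiring R]
    [LinearOrder R] [IsStrictOrderedRing R] {A : Matrix V V R} {r : R} (hr : 0 < r)
    (hA : ∀ i j, 0 ≤ A i j) (hrow : ∀ i, ∑ j, A i j = r) (hcol : ∀ j, ∑ i, A i j = r) :
    ∃ σ : Equiv.Perm V, ∀ i, A i (σ i) ≠ 0 := by
  let N : V → Finset V := fun i => {j | A i j ≠ 0}
  have hall : ∀ S : Finset V, #S ≤ #(S.biUnion N) := by
    intro S
    have hrowN : ∀ i ∈ S, ∑ j ∈ S.biUnion N, A i j = r := fun i hi =>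
      (sum_subset (subset_univ _) fun j _ hj => by
        by_contra h
        exact hj (mem_biUnion.2 ⟨i, hi, mem_filter.2 ⟨mem_univ j, h⟩⟩)).trans (hrow i)
    refine Nat.cast_le.1 (le_of_mul_le_mul_right ?_ hr)
    calc (#S : R) * r = ∑ i ∈ S, ∑ j ∈ S.biUnion N, A i j := by
          rw [sum_congr rfl hrowN, sum_const, nsmul_eq_mul]
      _ ≤ ∑ i, ∑ j ∈ S.biUnion N, A i j :=
          sum_le_sum_of_subset_of_nonneg (subset_univ S) fun i _ _ => sum_nonneg fun j _ => hA i j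
      _ = ∑ j ∈ S.biUnion N, ∑ i, A i j := sum_comm
      _ = #(S.biUnion N) * r := by rw [sum_congr rfl fun j _ => hcol j, sum_const, nsmul_eq_mul]
  obtain ⟨f, hf, hfN⟩ := (all_card_le_biUnion_card_iff_exists_injective N).1 hall
  exact ⟨Equiv.ofBijective f (Finite.injective_iff_bijective.1 hf), fun i => (mem_filter.1 (hfN i)).2⟩

section

variable {E : Finset (V × V)} {L M : V × V → ℕ} {r s : ℕ}

section

omit [Fintype V]

namespace IsMagicD

lemma eq_zero (h : IsMagicD E L 0) : L = 0 := by
  funext e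
  by_cases he : e ∈ E
  · exact sum_eq_zero_iff.1 (h.2.1 e.1) e (mem_filter.2 ⟨he, rfl⟩)
  · exact h.1 e he

lemma ne_zero [Nonempty V] (h : IsMagicD E L r) (hr : r ≠ 0) : L ≠ 0 := by
  rintro rfl
  simpa [eq_comm, hr] using h.2.1 (Classical.arbitrary V)

lemma tsub (hL : IsMagicD E L (r + s)) (hM : IsMagicD E M s) (hle : M ≤ L) :
    IsMagicD E (L - M) r := by
  refine ⟨fun e he => by simp [hL.1 e he], fun v => ?_, fun v => ?_⟩ <;>
    simp only [Pi.sub_apply]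
  · rw [sum_tsub_distrib _ fun e _ => hle e, hL.2.1 v, hM.2.1 v, Nat.add_sub_cancel]
  · rw [sum_tsub_distrib _ fun e _ => hle e, hL.2.2 v, hM.2.2 v, Nat.add_sub_cancel]

end IsMagicD

end

lemma sum_filter_fst_eq_sum_of_support (hL : ∀ e ∉ E, L e = 0) (v : V) :
    ∑ e ∈ E with e.1 = v, L e = ∑ w, L (v, w) := by
  rw [sum_filter, sum_subset (subset_univ E) fun e _ he => by simp [hL e he],
    Fintype.sum_prod_type_right]
  simp

lemma sum_filter_snd_eq_sum_of_support (hL : ∀ e ∉ E, L e = 0) (w : V) :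
    ∑ e ∈ E with e.2 = w, L e = ∑ v, L (v, w) := by
  rw [sum_filter, sum_subset (subset_univ E) fun e _ he => by simp [hL e he],
    Fintype.sum_prod_type]
  simp

lemma isMagicD_permMatrix {σ : Equiv.Perm V} (hσ : ∀ v, (v, σ v) ∈ E) :
    IsMagicD E (fun e => σ.permMatrix ℕ e.1 e.2) 1 := by
  have hsupp : ∀ e ∉ E, σ.permMatrix ℕ e.1 e.2 = 0 := by
    rintro ⟨v, w⟩ he
    have : σ v ≠ w := by rintro rfl; exact he (hσ v)
    simp [PEquiv.toMatrix_apply, this]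
  refine ⟨hsupp, fun v => ?_, fun w => ?_⟩
  · rw [sum_filter_fst_eq_sum_of_support hsupp]
    exact sum_row_of_mem_doublyStochastic permMatrix_mem_doublyStochastic v
  · rw [sum_filter_snd_eq_sum_of_support hsupp]
    exact sum_col_of_mem_doublyStochastic permMatrix_mem_doublyStochastic w

namespace IsMagicD

lemma exists_isMagicD_one_le (h : IsMagicD E L (r + 1)) : ∃ M, IsMagicD E M 1 ∧ M ≤ L := by
  obtain ⟨σ, hσ⟩ := Matrix.exists_perm_forall_ne_zero (A := Function.curry L)
    (Nat.succ_pos r) (fun _ _ => Nat.zero_le _)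
    (fun v => (sum_filter_fst_eq_sum_of_support h.1 v).symm.trans (h.2.1 v))
    (fun w => (sum_filter_snd_eq_sum_of_support h.1 w).symm.trans (h.2.2 w))
  refine ⟨_, isMagicD_permMatrix fun v => not_imp_comm.1 (h.1 _) (hσ v), ?_⟩
  rintro ⟨v, w⟩
  by_cases hw : σ v = w
  · subst hw
    simpa [PEquiv.toMatrix_apply, Nat.one_le_iff_ne_zero] using hσ v
  · simp [PEquiv.toMatrix_apply, hw]

theorem exists_eq_sum_fin (h : IsMagicD E L r) :
    ∃ f : Fin r → V × V → ℕ, (∀ i, IsMagicD E (f i) 1) ∧ L = ∑ i, f i := by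
  induction r generalizing L with
  | zero => exact ⟨finZeroElim, finZeroElim, by simp [h.eq_zero]⟩
  | succ r ih =>
    obtain ⟨M, hM, hle⟩ := h.exists_isMagicD_one_le
    obtain ⟨f, hf, hsum⟩ := ih (h.tsub hM hle)
    refine ⟨Fin.cons M f, Fin.cases hM hf, ?_⟩
    rw [Fin.sum_cons, ← hsum, add_tsub_cancel_of_le hle]

end IsMagicD

theorem IsIrreducibleMagicD.isMagicD_one (h : IsIrreducibleMagicD E L) : IsMagicD E L 1 := by
  obtain ⟨⟨r, hr⟩, hL, hirr⟩ := h
  obtain ⟨e, -⟩ := Function.ne_iff.1 hL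
  have : Nonempty V := ⟨e.1⟩
  obtain _ | _ | r := r
  · exact absurd hr.eq_zero hL
  · exact hr
  · obtain ⟨M, hM, hle⟩ := hr.exists_isMagicD_one_le
    have hrest := hr.tsub hM hle
    exact absurd (add_tsub_cancel_of_le hle).symm
      (hirr M _ ⟨1, hM⟩ ⟨_, hrest⟩ (hM.ne_zero one_ne_zero) (hrest.ne_zero r.succ_ne_zero))

end

/-- Let `D` be a digraph.  Every magic labeling of `D` of magic sum `r` can be written
as a sum of `r` magic labelings of `D` of magic sum `1`; in particular, every
irreducible magic labeling of `D` has magic sum `1`. -/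
theorem digraph_magic_decomposition (E : Finset (V × V)) :
    (∀ (L : V × V → ℕ) (r : ℕ), IsMagicD E L r →
      ∃ f : Fin r → (V × V → ℕ), (∀ i, IsMagicD E (f i) 1) ∧ L = ∑ i, f i) ∧
    (∀ L : V × V → ℕ, IsIrreducibleMagicD E L → IsMagicD E L 1) :=
  ⟨fun _ _ h => h.exists_eq_sum_fin, fun _ h => h.isMagicD_one⟩
end
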